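/- arXiv:2605.17529 — 2 statements merged into one kernel-verified Lean document; each statement's English description precedes it below -/
import Mathlib

section
/- Let u₁,…,u_k : ℕ → ℤ. Suppose there exist real numbers θ₁,…,θ_k and a real polynomial P such that D = sup_{n ∈ ℕ} |Σ_{i=1}^k θ_i u_i(n) − P(n)| < ∞. Assume moreover that there exist β > 0 and ρ > 0 such that ‖β·P(n)‖ ≥ ρ for every n ∈ ℕ, and β·D < ρ. Then there exists a set E ⊆ ℕ of positive natural density such that R_{u₁}(E) ∩ ⋯ ∩ R_{u_k}(E) = ∅. -/
open Filter

/-- Distance from a real number to the nearest integer. -/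
noncomputable def distNearestInt (x : ℝ) : ℝ := |x - round x|

/-- A set of naturals is thick if it contains arbitrarily long blocks of
consecutive integers. -/
def Thick (S : Set ℕ) : Prop := ∀ L : ℕ, ∃ N : ℕ, ∀ j : ℕ, j ≤ L → N + j ∈ S

/-- A set of naturals is syndetic if it has bounded gaps. -/
def Syndetic (S : Set ℕ) : Prop :=
  ∃ G : ℕ, 0 < G ∧ ∀ a : ℕ, ∃ n ∈ S, a ≤ n ∧ n < a + G

/-- A set is piecewise syndetic if it is the intersection of a thick set and a
syndetic set. -/
def PiecewiseSyndetic (S : Set ℕ) : Prop :=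
  ∃ T B : Set ℕ, Thick T ∧ Syndetic B ∧ S = T ∩ B

open Classical in
/-- The number of elements of `E ∩ {1, …, N}`. -/
noncomputable def countIn (E : Set ℕ) (N : ℕ) : ℕ :=
  ((Finset.Icc 1 N).filter (fun n => n ∈ E)).card

/-- `E` has a natural density that exists and is positive. -/
def PosDensity (E : Set ℕ) : Prop :=
  ∃ d : ℝ, 0 < d ∧
    Tendsto (fun N : ℕ => (countIn E N : ℝ) / (N : ℝ)) atTop (nhds d)

/-- The return-time set `R_u(E) = {n : ∃ m ∈ E, m + u n ∈ E}`. -/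
def retSet (u : ℕ → ℤ) (E : Set ℕ) : Set ℕ :=
  {n : ℕ | ∃ m m' : ℕ, m ∈ E ∧ m' ∈ E ∧ (m' : ℤ) = (m : ℤ) + u n}

/-- The return-time set along the floor of a real-valued function. -/
noncomputable def retSetFloor (f : ℝ → ℝ) (E : Set ℕ) : Set ℕ :=
  retSet (fun n => ⌊f (n : ℝ)⌋) E

/-- The return-time set along the closest integer to a real-valued function. -/
noncomputable def retSetRound (f : ℝ → ℝ) (E : Set ℕ) : Set ℕ :=
  retSet (fun n => round (f (n : ℝ))) E

/-!
Put `δ = ρ - β D > 0` and view everything on the circle `ℝ/ℤ`, where `distNearestInt` is the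
norm. By pigeonhole in the compact group `(ℝ/ℤ)ᵏ`, the Bohr set of those `m` with
`‖β θᵢ m‖ < ε` for all `i` is syndetic, so it contains a set `E` of positive density (one point
in each block of a fixed length). If `n` were a common return time, each `uᵢ(n)` would be a
difference of two elements of `E`, so `‖β ∑ θᵢ uᵢ(n)‖ ≤ 2kε < δ`; but `β ∑ θᵢ uᵢ(n)` lies
within `β D` of `β P(n)`, whose distance to `ℤ` is at least `ρ`.
-/

open Filter Topology

lemma exists_forall_exists_le_eq {β : Type*} [Finite β] (f : ℕ → β) :
    ∃ M, ∀ n, ∃ m ≤ M, f m = f n := by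
  choose g hg using fun v : Set.range f => v.2
  obtain ⟨M, hM⟩ := (Set.finite_range g).bddAbove
  exact ⟨M, fun n => ⟨g ⟨f n, n, rfl⟩, hM (Set.mem_range_self _), hg _⟩⟩

lemma TotallyBounded.exists_forall_exists_le_dist_lt {X : Type*} [PseudoMetricSpace X]
    {x : ℕ → X} (hx : TotallyBounded (Set.range x)) {ε : ℝ} (hε : 0 < ε) :
    ∃ M, ∀ n, ∃ m ≤ M, dist (x m) (x n) < ε := by
  obtain ⟨t, ht, hcover⟩ := Metric.totallyBounded_iff.1 hx (ε / 2) (half_pos hε)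
  have hcenter : ∀ n, ∃ c : t, dist (x n) c < ε / 2 := fun n => by
    simpa using hcover (Set.mem_range_self n)
  choose c hc using hcenter
  have := ht.to_subtype
  obtain ⟨M, hM⟩ := exists_forall_exists_le_eq c
  refine ⟨M, fun n => ?_⟩
  obtain ⟨m, hmM, hcm⟩ := hM n
  have hm := hc m
  rw [hcm] at hm
  exact ⟨m, hmM, (dist_triangle_right _ _ _).trans_lt (by linarith [hc n])⟩

theorem syndetic_setOf_norm_nsmul_lt {G : Type*} [SeminormedAddCommGroup G] [CompactSpace G]
    (g : G) {ε : ℝ} (hε : 0 < ε) : Syndetic {n : ℕ | ‖n • g‖ < ε} := by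
  have hbdd : TotallyBounded (Set.range fun n : ℕ => n • g) :=
    isCompact_univ.totallyBounded.subset (Set.subset_univ _)
  obtain ⟨M, hM⟩ := hbdd.exists_forall_exists_le_dist_lt hε
  refine ⟨M + 1, M.succ_pos, fun a => ?_⟩
  obtain ⟨m, hmM, hm⟩ := hM (a + M)
  refine ⟨a + M - m, ?_, by omega, by omega⟩
  rwa [Set.mem_ofPred_eq, sub_nsmul _ (by omega), ← sub_eq_add_neg, ← dist_eq_norm, dist_comm]

lemma tendsto_div_natCast_of_abs_sub_mul_le {f : ℕ → ℝ} {a C : ℝ}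
    (h : ∀ N : ℕ, |f N - a * N| ≤ C) : Tendsto (fun N : ℕ => f N / N) atTop (𝓝 a) := by
  rw [tendsto_iff_norm_sub_tendsto_zero]
  refine squeeze_zero' (.of_forall fun _ => norm_nonneg _) ?_
    (tendsto_const_div_atTop_nhds_zero_nat C)
  filter_upwards [eventually_gt_atTop 0] with N hN
  have hN' : (0 : ℝ) < N := by exact_mod_cast hN
  rw [Real.norm_eq_abs, show f N / N - a = (f N - a * N) / N by field_simp, abs_div,
    Nat.abs_cast]
  exact div_le_div_of_nonneg_right (h N) hN'.le

section Blocks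

variable {G : ℕ} {f : ℕ → ℕ}

lemma countIn_range_le (hf : ∀ j, f j / G = j) (N : ℕ) :
    countIn (Set.range f) N ≤ N / G + 1 := by
  classical
  calc countIn (Set.range f) N ≤ ((Finset.Iic (N / G)).image f).card := by
        refine Finset.card_le_card fun x hx => ?_
        obtain ⟨hxN, j, rfl⟩ := Finset.mem_filter.1 hx
        exact Finset.mem_image.2
          ⟨j, Finset.mem_Iic.2 (hf j ▸ Nat.div_le_div_right (Finset.mem_Icc.1 hxN).2), rfl⟩
    _ ≤ N / G + 1 := Finset.card_image_le.trans (Nat.card_Iic _).le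

lemma div_le_countIn_range_add_one (hf : ∀ j, f j / G = j) (N : ℕ) :
    N / G ≤ countIn (Set.range f) N + 1 := by
  classical
  have hinj : Set.InjOn f (Finset.Ico 1 (N / G)) := fun j _ j' _ h => by
    rw [← hf j, ← hf j', h]
  have hmaps : Set.MapsTo f (Finset.Ico 1 (N / G))
      ((Finset.Icc 1 N).filter (· ∈ Set.range f)) := by
    intro j hj
    obtain ⟨hj1, hjN⟩ := Finset.mem_Ico.1 hj
    have hpos : 0 < f j := Nat.pos_of_ne_zero fun h0 => by
      have := hf j
      rw [h0, Nat.zero_div] at this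
      omega
    have hlt : f j < N := lt_of_not_ge fun hle => by
      have := Nat.div_le_div_right (c := G) hle
      rw [hf j] at this
      omega
    exact Finset.mem_filter.2 ⟨Finset.mem_Icc.2 ⟨hpos, hlt.le⟩, j, rfl⟩
  have := Finset.card_le_card_of_injOn f hmaps hinj
  rw [Nat.card_Ico] at this
  unfold countIn
  omega

lemma abs_countIn_range_sub_le (hf : ∀ j, f j / G = j) (N : ℕ) :
    |(countIn (Set.range f) N : ℝ) - 1 / G * N| ≤ 2 := by
  have hup : ((countIn (Set.range f) N : ℕ) : ℝ) ≤ ((N / G : ℕ) : ℝ) + 1 := by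
    exact_mod_cast countIn_range_le hf N
  have hlow : ((N / G : ℕ) : ℝ) ≤ (countIn (Set.range f) N : ℝ) + 1 := by
    exact_mod_cast div_le_countIn_range_add_one hf N
  have hdiv_le : ((N / G : ℕ) : ℝ) ≤ (N : ℝ) / G := Nat.cast_div_le
  have hdiv_gt : (N : ℝ) / G < ((N / G : ℕ) : ℝ) + 1 := by
    rw [← Nat.floor_div_eq_div (K := ℝ)]
    exact Nat.lt_floor_add_one _
  rw [one_div_mul_eq_div, abs_le]
  constructor <;> linarith

lemma posDensity_range_of_div_eq (hf : ∀ j, f j / G = j) : PosDensity (Set.range f) := by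
  have hG : 0 < G := Nat.pos_of_ne_zero fun h => by simpa [h] using hf 1
  exact ⟨1 / G, by positivity,
    tendsto_div_natCast_of_abs_sub_mul_le (abs_countIn_range_sub_le hf)⟩

end Blocks

theorem Syndetic.exists_subset_posDensity {S : Set ℕ} (hS : Syndetic S) :
    ∃ E ⊆ S, PosDensity E := by
  obtain ⟨G, -, hS⟩ := hS
  choose b hbS hb using hS
  refine ⟨Set.range fun j => b (j * G), Set.range_subset_iff.2 fun j => hbS _,
    posDensity_range_of_div_eq fun j => Nat.div_eq_of_lt_le (hb _).1 ?_⟩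
  linarith [(hb (j * G)).2]

lemma norm_zsmul_lt_of_mem_retSet {G : Type*} [SeminormedAddCommGroup G] {g : G} {ε : ℝ}
    {E : Set ℕ} (hE : ∀ m ∈ E, ‖m • g‖ < ε) {u : ℕ → ℤ} {n : ℕ} (hn : n ∈ retSet u E) :
    ‖u n • g‖ < 2 * ε := by
  obtain ⟨m, m', hm, hm', hu⟩ := hn
  have hdiff : u n • g = m' • g - m • g := by
    rw [show u n = (m' : ℤ) - m by omega, sub_smul, natCast_zsmul, natCast_zsmul]
  calc ‖u n • g‖ ≤ ‖m' • g‖ + ‖m • g‖ := hdiff ▸ norm_sub_le _ _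
    _ < 2 * ε := by linarith [hE m hm, hE m' hm']

lemma distNearestInt_le_norm_add_abs_sub (x y : ℝ) :
    distNearestInt x ≤ ‖(y : UnitAddCircle)‖ + |x - y| := by
  rw [distNearestInt, ← UnitAddCircle.norm_eq]
  calc ‖(x : UnitAddCircle)‖ ≤ ‖(y : UnitAddCircle)‖ + ‖(x : UnitAddCircle) - y‖ :=
        norm_le_norm_add_norm_sub' _ _
    _ ≤ ‖(y : UnitAddCircle)‖ + |x - y| := by
        rw [← AddCircle.coe_sub]
        gcongr
        exact QuotientAddGroup.norm_mk_le_norm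

theorem stmt_9_general (k : ℕ) (u : Fin k → ℕ → ℤ) (θ : Fin k → ℝ) (P : Polynomial ℝ)
    (D : ℝ) (hD : ∀ n : ℕ, |(∑ i, θ i * (u i n : ℝ)) - P.eval (n : ℝ)| ≤ D)
    (β ρ : ℝ) (hβ : 0 < β)
    (hlow : ∀ n : ℕ, ρ ≤ distNearestInt (β * P.eval (n : ℝ)))
    (hβD : β * D < ρ) :
    ∃ E : Set ℕ, PosDensity E ∧ (⋂ i, retSet (u i) E) = ∅ := by
  set ε := (ρ - β * D) / (2 * k + 1)
  have hε : 0 < ε := div_pos (by linarith) (by positivity)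
  have hkε : (2 * k + 1) * ε = ρ - β * D := mul_div_cancel₀ _ (by positivity)
  let g : Fin k → UnitAddCircle := fun i => ↑(β * θ i)
  obtain ⟨E, hES, hE⟩ := (syndetic_setOf_norm_nsmul_lt g hε).exists_subset_posDensity
  refine ⟨E, hE, Set.eq_empty_of_forall_notMem fun n hn => ?_⟩
  have hsmall : ∀ i, ‖u i n • g i‖ < 2 * ε := fun i =>
    norm_zsmul_lt_of_mem_retSet (fun m hm => (norm_le_pi_norm (m • g) i).trans_lt (hES hm))
      (Set.mem_iInter.1 hn i)
  have hcoe : ((β * ∑ i, θ i * u i n : ℝ) : UnitAddCircle) = ∑ i, u i n • g i := by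
    simp only [Finset.mul_sum, QuotientAddGroup.mk_sum, g, ← AddCircle.coe_zsmul, zsmul_eq_mul]
    congr! 2
    ring
  have hclose : |β * P.eval (n : ℝ) - β * ∑ i, θ i * u i n| ≤ β * D := by
    rw [← mul_sub, abs_mul, abs_of_pos hβ, abs_sub_comm]
    exact mul_le_mul_of_nonneg_left (hD n) hβ.le
  have hcontra : ρ ≤ 2 * k * ε + β * D := calc
    ρ ≤ distNearestInt (β * P.eval (n : ℝ)) := hlow n
    _ ≤ ∑ i, ‖u i n • g i‖ + β * D :=
        (distNearestInt_le_norm_add_abs_sub _ _).trans (hcoe ▸ add_le_add (norm_sum_le _ _) hclose)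
    _ ≤ ∑ _i : Fin k, 2 * ε + β * D := by gcongr with i; exact (hsmall i).le
    _ = 2 * k * ε + β * D := by
        rw [Finset.sum_const, Finset.card_univ, Fintype.card_fin, nsmul_eq_mul]; ring
  linarith

/-- Proposition 2.4 (Bohr obstruction to nonemptiness). -/
theorem stmt_9 (k : ℕ) (u : Fin k → ℕ → ℤ) (θ : Fin k → ℝ) (P : Polynomial ℝ)
    (D : ℝ) (hD : ∀ n : ℕ, |(∑ i, θ i * (u i n : ℝ)) - P.eval (n : ℝ)| ≤ D)
    (β ρ : ℝ) (hβ : 0 < β) (hρ : 0 < ρ)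
    (hlow : ∀ n : ℕ, ρ ≤ distNearestInt (β * P.eval (n : ℝ)))
    (hβD : β * D < ρ) :
    ∃ E : Set ℕ, PosDensity E ∧ (⋂ i, retSet (u i) E) = ∅ :=
  stmt_9_general k u θ P D hD β ρ hβ hlow hβD
end

section
/- Let λ ∈ ℝ be irrational and let β > 0 be such that 1, β, λβ are linearly independent over ℚ. Let δ > 0 and η > 0 satisfy 2η + max(1, |λ|)·β < 2δ. Define E = {m ∈ ℕ : ‖β·m‖ < δ and ‖λ·β·m‖ < δ}, B = {n ∈ ℕ : ‖β·n‖ < η and ‖λ·β·n‖ < η}, T = {n ∈ ℕ : ‖β·n^{3/2}‖ < η, ‖λ·β·n^{3/2}‖ < η, and ‖λ²·β·n^{3/2}‖ < η}, f₁(t) = t^{3/2}, and f₂(t) = λ·t^{3/2} + t. Then B ∩ T ⊆ R_{f₁}(E) ∩ R_{f₂}(E). -/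
open Filter

/-!
For `n ∈ B ∩ T` and either `f`, the integer `K = ⌊f n⌋` satisfies `‖βK‖ < 2δ` and `‖λβK‖ < 2δ`:
expanding `β f n` and `λβ f n`, every term is controlled by the conditions defining `B` and `T`,
and dropping the fractional part of `f n` costs at most `max 1 |λ| · β`. Every such `K` is a return
time of the Bohr set `E`: by Kronecker's theorem for `(β, λβ)` there is `m` with `(βm, λβm)` close
to `-(βK, λβK) / 2` modulo `ℤ²`, and then both `m` and `m + K` lie in `E`.

Kronecker's theorem is proved by Bohr's argument. The nonnegative trigonometric polynomial
`(2 + 2 cos 2πu)^k (2 + 2 cos 2πv)^k` evaluated along `(βm - x, γm - y)` has all its nonzero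
frequencies nontrivial in `m`, by the independence of `1, β, γ`, so its mean value along the
orbit is its constant coefficient `C(2k, k)²`. For large `k` this exceeds `(4 (2 + 2 cos 2πε))^k`,
its maximum outside the `ε`-neighbourhood of `ℤ²`.
-/

open Real FourierTransform Finset

lemma distNearestInt_nonneg (x : ℝ) : 0 ≤ distNearestInt x := abs_nonneg _

lemma distNearestInt_le_add_abs_sub (x y : ℝ) (n : ℤ) :
    distNearestInt x ≤ distNearestInt y + |x - y - n| :=
  calc distNearestInt x ≤ |x - ↑(round y + n)| := round_le x _
    _ = |(y - round y) + (x - y - n)| := by push_cast; ring_nf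
    _ ≤ distNearestInt y + |x - y - n| := abs_add_le _ _

lemma distNearestInt_add_le (x y : ℝ) :
    distNearestInt (x + y) ≤ distNearestInt x + distNearestInt y :=
  calc distNearestInt (x + y) ≤ |x + y - ↑(round x + round y)| := round_le _ _
    _ = |(x - round x) + (y - round y)| := by push_cast; ring_nf
    _ ≤ distNearestInt x + distNearestInt y := abs_add_le _ _

lemma distNearestInt_mul_floor_le (c y : ℝ) :
    distNearestInt (c * ⌊y⌋) ≤ distNearestInt (c * y) + |c| :=
  calc distNearestInt (c * ⌊y⌋) ≤ distNearestInt (c * y) + |c * ⌊y⌋ - c * y - (0 : ℤ)| :=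
        distNearestInt_le_add_abs_sub _ _ 0
    _ = distNearestInt (c * y) + |c| * Int.fract y := by
        rw [Int.cast_zero, sub_zero, ← mul_sub, abs_mul, abs_sub_comm, ← Int.fract,
          abs_of_nonneg (Int.fract_nonneg y)]
    _ ≤ distNearestInt (c * y) + |c| := by
        gcongr
        exact mul_le_of_le_one_right (abs_nonneg c) (Int.fract_lt_one y).le

lemma cos_two_pi_mul_distNearestInt (x : ℝ) :
    cos (2 * π * distNearestInt x) = cos (2 * π * x) := by
  rw [distNearestInt, ← abs_of_pos two_pi_pos, ← abs_mul, cos_abs, abs_of_pos two_pi_pos,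
    mul_sub, mul_comm _ (round x : ℝ), cos_sub_int_mul_two_pi]

lemma cos_two_pi_mul_le_of_le_distNearestInt {x ε : ℝ} (hε : 0 ≤ ε)
    (h : ε ≤ distNearestInt x) : cos (2 * π * x) ≤ cos (2 * π * ε) := by
  rw [← cos_two_pi_mul_distNearestInt]
  have : distNearestInt x ≤ 1 / 2 := abs_sub_round x
  apply cos_le_cos_of_nonneg_of_le_pi (by positivity) _ (by gcongr)
  nlinarith [pi_pos]

lemma fourierChar_eq_one_iff (x : ℝ) : 𝐞 x = 1 ↔ ∃ n : ℤ, x = n := by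
  rw [fourierChar_apply', Circle.exp_eq_one]
  refine exists_congr fun n => ?_
  constructor <;> intro h
  · nlinarith [pi_pos]
  · rw [h]; ring

lemma two_add_two_cos_pow_eq_sum (k : ℕ) (u : ℝ) :
    (((2 + 2 * cos (2 * π * u)) ^ k : ℝ) : ℂ) =
      ∑ j ∈ range (2 * k + 1), ((2 * k).choose j : ℂ) * 𝐞 ((j - k : ℝ) * u) := by
  have hcos : ((2 + 2 * cos (2 * π * u) : ℝ) : ℂ) = 𝐞 (-u) * (1 + 𝐞 u) ^ 2 := by
    have h := Complex.exp_ne_zero (((2 * π * u : ℝ) : ℂ) * Complex.I)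
    simp only [fourierChar_apply, mul_neg, Complex.ofReal_neg, neg_mul, Complex.exp_neg]
    push_cast [Complex.cos, neg_mul, Complex.exp_neg] at h ⊢
    field_simp
    ring_nf
  rw [Complex.ofReal_pow, hcos, mul_pow, ← pow_mul, add_comm, add_pow, mul_sum]
  refine sum_congr rfl fun j _ => ?_
  have he : (𝐞 ((j - k : ℝ) * u) : ℂ) = (𝐞 u : ℂ) ^ j * (𝐞 (-u) : ℂ) ^ k := by
    rw [show (j - k : ℝ) * u = j • u + k • (-u) by simp only [nsmul_eq_mul]; ring,
      AddChar.map_add_eq_mul, AddChar.map_nsmul_eq_pow, AddChar.map_nsmul_eq_pow]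
    simp
  rw [he]
  ring

lemma two_add_two_cos_pow_mul_eq_sum (k : ℕ) (u v : ℝ) :
    (((2 + 2 * cos (2 * π * u)) ^ k * (2 + 2 * cos (2 * π * v)) ^ k : ℝ) : ℂ) =
      ∑ q ∈ range (2 * k + 1) ×ˢ range (2 * k + 1),
        ((2 * k).choose q.1 : ℂ) * (2 * k).choose q.2 *
          𝐞 ((q.1 - k : ℝ) * u + (q.2 - k : ℝ) * v) := by
  rw [Complex.ofReal_mul, two_add_two_cos_pow_eq_sum, two_add_two_cos_pow_eq_sum, sum_mul_sum,
    ← sum_product']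
  refine sum_congr rfl fun q _ => ?_
  rw [AddChar.map_add_eq_mul, Circle.coe_mul]
  ring

lemma two_add_two_cos_pow_mul_le {ε u : ℝ} (hε : 0 ≤ ε) (hu : ε ≤ distNearestInt u) (k : ℕ)
    (v : ℝ) : (2 + 2 * cos (2 * π * u)) ^ k * (2 + 2 * cos (2 * π * v)) ^ k ≤
      (4 * (2 + 2 * cos (2 * π * ε))) ^ k := by
  have h0 (t : ℝ) : 0 ≤ 2 + 2 * cos (2 * π * t) := by linarith [neg_one_le_cos (2 * π * t)]
  rw [mul_comm 4, mul_pow]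
  exact mul_le_mul
    (pow_le_pow_left₀ (h0 u) (by linarith [cos_two_pi_mul_le_of_le_distNearestInt hε hu]) k)
    (pow_le_pow_left₀ (h0 v) (by linarith [cos_le_one (2 * π * v)]) k)
    (pow_nonneg (h0 v) k) (pow_nonneg (h0 ε) k)

lemma norm_geom_sum_le_of_norm_eq_one {z : ℂ} (hz : ‖z‖ = 1) (h1 : z ≠ 1) (N : ℕ) :
    ‖∑ m ∈ range N, z ^ m‖ ≤ 2 / ‖z - 1‖ := by
  rw [geom_sum_eq h1, norm_div]
  gcongr
  calc ‖z ^ N - 1‖ ≤ ‖z ^ N‖ + ‖(1 : ℂ)‖ := norm_sub_le _ _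
    _ = 2 := by rw [norm_pow, hz, one_pow, norm_one]; norm_num

lemma exists_lt_of_eq_sum_fourierChar {ι : Type*} {s : Finset ι} {i₀ : ι} (hi₀ : i₀ ∈ s)
    (a : ι → ℂ) (θ : ι → ℝ) (hθ₀ : θ i₀ = 0) (hθ : ∀ i ∈ s, i ≠ i₀ → 𝐞 (θ i) ≠ 1)
    (f : ℕ → ℝ) (hf : ∀ m : ℕ, (f m : ℂ) = ∑ i ∈ s, a i * 𝐞 (m * θ i))
    {c : ℝ} (hc : c < (a i₀).re) : ∃ m, c < f m := by
  classical
  set C := ∑ i ∈ s.erase i₀, ‖a i‖ * (2 / ‖(𝐞 (θ i) : ℂ) - 1‖)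
  have hsum : ∀ N : ℕ, N * (a i₀).re - C ≤ ∑ m ∈ range N, f m := by
    intro N
    set R := ∑ i ∈ s.erase i₀, a i * ∑ m ∈ range N, (𝐞 (θ i) : ℂ) ^ m
    have hexp : ((∑ m ∈ range N, f m : ℝ) : ℂ) = N * a i₀ + R := by
      have hpow : ∀ (m : ℕ) (t : ℝ), (𝐞 (m * t) : ℂ) = (𝐞 t : ℂ) ^ m := fun m t => by
        rw [← nsmul_eq_mul, AddChar.map_nsmul_eq_pow, Circle.coe_pow]
      simp_rw [Complex.ofReal_sum, hf, hpow, sum_comm (s := range N), ← mul_sum]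
      rw [← add_sum_erase s _ hi₀, hθ₀]
      simp [R, mul_comm]
    have hR : ‖R‖ ≤ C := by
      refine (norm_sum_le _ _).trans (sum_le_sum fun i hi => ?_)
      rw [norm_mul]
      gcongr
      exact norm_geom_sum_le_of_norm_eq_one (Circle.norm_coe _)
        (fun h => hθ i (mem_of_mem_erase hi) (ne_of_mem_erase hi) (Circle.coe_eq_one.mp h)) N
    have hre := congrArg Complex.re hexp
    rw [Complex.ofReal_re, Complex.add_re, ← Complex.ofReal_natCast, Complex.re_ofReal_mul] at hre
    linarith [(abs_le.mp ((Complex.abs_re_le_norm R).trans hR)).1]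
  by_contra! h
  obtain ⟨N, hN⟩ := exists_nat_gt (C / ((a i₀).re - c))
  have hle : ∑ m ∈ range N, f m ≤ N * c := by
    simpa using sum_le_sum fun m (_ : m ∈ range N) => h m
  rw [div_lt_iff₀ (sub_pos.mpr hc)] at hN
  nlinarith [hsum N]

lemma exists_pow_lt_centralBinom_sq {r : ℝ} (hr0 : 0 ≤ r) (hr : r < 4) :
    ∃ k : ℕ, (4 * r) ^ k < (Nat.centralBinom k : ℝ) ^ 2 := by
  have hlim := tendsto_pow_const_mul_const_pow_of_abs_lt_one 2
    (r := r / 4) (by rw [abs_of_nonneg (by positivity)]; linarith)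
  obtain ⟨k, hk, hk1⟩ := ((hlim.eventually (gt_mem_nhds (by norm_num : (0 : ℝ) < 1 / 4))).and
    (eventually_ge_atTop 1)).exists
  refine ⟨k, ?_⟩
  have hcb : (4 : ℝ) ^ k ≤ 2 * k * Nat.centralBinom k := by
    exact_mod_cast Nat.four_pow_le_two_mul_self_mul_centralBinom k hk1
  have hk0 : (1 : ℝ) ≤ k := by exact_mod_cast hk1
  calc (4 * r) ^ k = (4 : ℝ) ^ k * 4 ^ k * (r / 4) ^ k := by
        rw [← mul_pow, ← mul_pow]; ring_nf
    _ < (4 : ℝ) ^ k * 4 ^ k * (1 / (4 * k ^ 2)) := by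
        gcongr
        rw [lt_div_iff₀ (by positivity)]
        linarith
    _ = ((4 : ℝ) ^ k / (2 * k)) ^ 2 := by field_simp; ring
    _ ≤ (Nat.centralBinom k : ℝ) ^ 2 := by
        gcongr
        rw [div_le_iff₀ (by positivity)]
        linarith

lemma eq_zero_of_fourierChar_eq_one {β γ : ℝ}
    (hind : ∀ a b c : ℚ, (a : ℝ) + b * β + c * γ = 0 → a = 0 ∧ b = 0 ∧ c = 0)
    {p q : ℤ} (h : 𝐞 (p * β + q * γ) = 1) : p = 0 ∧ q = 0 := by
  obtain ⟨n, hn⟩ := (fourierChar_eq_one_iff _).mp h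
  obtain ⟨-, hp, hq⟩ := hind (-n) p q (by push_cast; linarith)
  exact ⟨by exact_mod_cast hp, by exact_mod_cast hq⟩

theorem exists_nat_distNearestInt_sub_lt {β γ : ℝ}
    (hind : ∀ a b c : ℚ, (a : ℝ) + b * β + c * γ = 0 → a = 0 ∧ b = 0 ∧ c = 0)
    (x y : ℝ) {ε : ℝ} (hε : 0 < ε) :
    ∃ m : ℕ, distNearestInt (β * m - x) < ε ∧ distNearestInt (γ * m - y) < ε := by
  set ε' := min ε (1 / 2)
  have hε' : 0 < ε' := lt_min hε one_half_pos
  set r := 2 + 2 * cos (2 * π * ε')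
  have hr0 : 0 ≤ r := by linarith [neg_one_le_cos (2 * π * ε')]
  have hr4 : r < 4 := by
    have := cos_lt_cos_of_nonneg_of_le_pi le_rfl
      (by nlinarith [pi_pos, min_le_right ε (1 / 2)]) (by positivity : 0 < 2 * π * ε')
    rw [cos_zero] at this
    linarith
  obtain ⟨k, hk⟩ := exists_pow_lt_centralBinom_sq hr0 hr4
  obtain ⟨m, hm⟩ : ∃ m : ℕ, (4 * r) ^ k <
      (2 + 2 * cos (2 * π * (β * m - x))) ^ k * (2 + 2 * cos (2 * π * (γ * m - y))) ^ k := by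
    refine exists_lt_of_eq_sum_fourierChar (s := range (2 * k + 1) ×ˢ range (2 * k + 1))
      (i₀ := (k, k)) (by simp; omega)
      (fun q => (2 * k).choose q.1 * (2 * k).choose q.2 *
        𝐞 (-((q.1 - k : ℝ) * x + (q.2 - k : ℝ) * y)))
      (fun q => (q.1 - k : ℝ) * β + (q.2 - k : ℝ) * γ) (by simp) ?_ _ (fun m => ?_) ?_
    · rintro ⟨i, j⟩ - hij h
      obtain ⟨hi, hj⟩ := eq_zero_of_fourierChar_eq_one hind (p := i - k) (q := j - k)
        (by push_cast; exact h)
      exact hij (Prod.ext (by omega) (by omega))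
    · rw [two_add_two_cos_pow_mul_eq_sum]
      refine sum_congr rfl fun q _ => ?_
      rw [show (q.1 - k : ℝ) * (β * m - x) + (q.2 - k : ℝ) * (γ * m - y) =
          -((q.1 - k : ℝ) * x + (q.2 - k : ℝ) * y) + m * ((q.1 - k : ℝ) * β + (q.2 - k : ℝ) * γ) by
        ring, AddChar.map_add_eq_mul, Circle.coe_mul]
      ring
    · simpa [← Nat.centralBinom_eq_two_mul_choose, sq] using hk
  refine ⟨m, ?_, ?_⟩ <;> by_contra! h
  · exact hm.not_ge (two_add_two_cos_pow_mul_le hε'.le ((min_le_left _ _).trans h) k _)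
  · exact hm.not_ge ((mul_comm _ _).trans_le
      (two_add_two_cos_pow_mul_le hε'.le ((min_le_left _ _).trans h) k _))

theorem exists_nat_ge_distNearestInt_sub_lt {β γ : ℝ}
    (hind : ∀ a b c : ℚ, (a : ℝ) + b * β + c * γ = 0 → a = 0 ∧ b = 0 ∧ c = 0)
    (x y : ℝ) {ε : ℝ} (hε : 0 < ε) (M : ℕ) :
    ∃ m ≥ M, distNearestInt (β * m - x) < ε ∧ distNearestInt (γ * m - y) < ε := by
  obtain ⟨m, hx, hy⟩ := exists_nat_distNearestInt_sub_lt hind (x - β * M) (y - γ * M) hε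
  refine ⟨m + M, le_add_self, ?_, ?_⟩
  · convert hx using 2; push_cast; ring
  · convert hy using 2; push_cast; ring

lemma distNearestInt_lt_of_add_half_lt {α δ m : ℝ} {K : ℤ}
    (h : distNearestInt (α * m + (α * K - round (α * K)) / 2) + distNearestInt (α * K) / 2 < δ) :
    distNearestInt (α * m) < δ ∧ distNearestInt (α * (m + K)) < δ := by
  set c := α * K - round (α * K)
  have hc : |c / 2| = distNearestInt (α * K) / 2 := by rw [abs_div, abs_two]; rfl
  constructor
  · calc distNearestInt (α * m)
          ≤ distNearestInt (α * m + c / 2) + |α * m - (α * m + c / 2) - (0 : ℤ)| :=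
          distNearestInt_le_add_abs_sub _ _ 0
      _ < δ := by rwa [Int.cast_zero, sub_zero, sub_add_cancel_left, abs_neg, hc]
  · calc distNearestInt (α * (m + K))
          ≤ distNearestInt (α * m + c / 2) + |α * (m + K) - (α * m + c / 2) - round (α * K)| :=
          distNearestInt_le_add_abs_sub _ _ _
      _ < δ := by rwa [show α * (m + K) - (α * m + c / 2) - round (α * K) = c / 2 by ring, hc]

def bohrSet (β γ δ : ℝ) : Set ℕ :=
  {m | distNearestInt (β * m) < δ ∧ distNearestInt (γ * m) < δ}

theorem mem_retSet_bohrSet {β γ δ : ℝ}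
    (hind : ∀ a b c : ℚ, (a : ℝ) + b * β + c * γ = 0 → a = 0 ∧ b = 0 ∧ c = 0)
    {u : ℕ → ℤ} {n : ℕ} (hβ : distNearestInt (β * u n) < 2 * δ)
    (hγ : distNearestInt (γ * u n) < 2 * δ) : n ∈ retSet u (bohrSet β γ δ) := by
  set K := u n
  obtain ⟨m, hmK, hβm, hγm⟩ := exists_nat_ge_distNearestInt_sub_lt hind
    (-((β * K - round (β * K)) / 2)) (-((γ * K - round (γ * K)) / 2))
    (ε := δ - max (distNearestInt (β * K)) (distNearestInt (γ * K)) / 2)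
    (by linarith [max_lt hβ hγ]) (-K).toNat
  rw [sub_neg_eq_add] at hβm hγm
  have hK : 0 ≤ (m : ℤ) + K := by have := Int.self_le_toNat (-K); omega
  obtain ⟨hβ₁, hβ₂⟩ := distNearestInt_lt_of_add_half_lt (α := β) (δ := δ) (m := m) (K := K)
    (by linarith [le_max_left (distNearestInt (β * K)) (distNearestInt (γ * K))] : _ + _ / 2 < δ)
  obtain ⟨hγ₁, hγ₂⟩ := distNearestInt_lt_of_add_half_lt (α := γ) (δ := δ) (m := m) (K := K)
    (by linarith [le_max_right (distNearestInt (β * K)) (distNearestInt (γ * K))] : _ + _ / 2 < δ)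
  have hcast : (((m + K).toNat : ℕ) : ℝ) = m + K := by exact_mod_cast Int.toNat_of_nonneg hK
  exact ⟨m, ((m : ℤ) + K).toNat, ⟨hβ₁, hγ₁⟩, ⟨hcast ▸ hβ₂, hcast ▸ hγ₂⟩, Int.toNat_of_nonneg hK⟩

theorem stmt_17_general (lam β : ℝ) (hβ0 : 0 < β)
    (hind : ∀ a b c : ℚ, (a : ℝ) + (b : ℝ) * β + (c : ℝ) * (lam * β) = 0 →
      a = 0 ∧ b = 0 ∧ c = 0)
    (δ η : ℝ)
    (hηβδ : 2 * η + max 1 |lam| * β < 2 * δ)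
    (E B T : Set ℕ)
    (hE : E = {m : ℕ | distNearestInt (β * (m : ℝ)) < δ ∧
      distNearestInt (lam * β * (m : ℝ)) < δ})
    (hB : B = {n : ℕ | distNearestInt (β * (n : ℝ)) < η ∧
      distNearestInt (lam * β * (n : ℝ)) < η})
    (hT : T = {n : ℕ | distNearestInt (β * (n : ℝ) ^ ((3 : ℝ) / 2)) < η ∧
      distNearestInt (lam * β * (n : ℝ) ^ ((3 : ℝ) / 2)) < η ∧
      distNearestInt (lam ^ 2 * β * (n : ℝ) ^ ((3 : ℝ) / 2)) < η}) :
    B ∩ T ⊆ retSetFloor (fun t => t ^ ((3 : ℝ) / 2)) E ∩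
      retSetFloor (fun t => lam * t ^ ((3 : ℝ) / 2) + t) E := by
  subst hE hB hT
  rintro n ⟨⟨hb₁, hb₂⟩, ht₁, ht₂, ht₃⟩
  set α := (n : ℝ) ^ ((3 : ℝ) / 2)
  have hβ : |β| ≤ max 1 |lam| * β := by
    rw [abs_of_pos hβ0]; exact le_mul_of_one_le_left hβ0.le (le_max_left _ _)
  have hlamβ : |lam * β| ≤ max 1 |lam| * β := by
    rw [abs_mul, abs_of_pos hβ0]; gcongr; exact le_max_right _ _
  have hη : 0 ≤ η := (distNearestInt_nonneg _).trans hb₁.le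
  constructor
  · refine mem_retSet_bohrSet hind (u := fun n => ⌊(n : ℝ) ^ ((3 : ℝ) / 2)⌋) ?_ ?_
    · linarith [distNearestInt_mul_floor_le β α]
    · linarith [distNearestInt_mul_floor_le (lam * β) α]
  · refine mem_retSet_bohrSet hind (u := fun n => ⌊lam * (n : ℝ) ^ ((3 : ℝ) / 2) + n⌋) ?_ ?_
    · have h := distNearestInt_mul_floor_le β (lam * α + n)
      rw [show β * (lam * α + n) = lam * β * α + β * n by ring] at h
      linarith [distNearestInt_add_le (lam * β * α) (β * n)]
    · have h := distNearestInt_mul_floor_le (lam * β) (lam * α + n)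
      rw [show lam * β * (lam * α + n) = lam ^ 2 * β * α + lam * β * n by ring] at h
      linarith [distNearestInt_add_le (lam ^ 2 * β * α) (lam * β * n)]

/-- The piecewise-syndeticity inclusion in the proof of Theorem 1.4(ii):
B ∩ T ⊆ R_{f₁}(E) ∩ R_{f₂}(E). -/
theorem stmt_17 (lam β : ℝ) (hlam : Irrational lam) (hβ0 : 0 < β)
    (hind : ∀ a b c : ℚ, (a : ℝ) + (b : ℝ) * β + (c : ℝ) * (lam * β) = 0 →
      a = 0 ∧ b = 0 ∧ c = 0)
    (δ η : ℝ) (hδ : 0 < δ) (hη : 0 < η)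
    (hηβδ : 2 * η + max 1 |lam| * β < 2 * δ)
    (E B T : Set ℕ)
    (hE : E = {m : ℕ | distNearestInt (β * (m : ℝ)) < δ ∧
      distNearestInt (lam * β * (m : ℝ)) < δ})
    (hB : B = {n : ℕ | distNearestInt (β * (n : ℝ)) < η ∧
      distNearestInt (lam * β * (n : ℝ)) < η})
    (hT : T = {n : ℕ | distNearestInt (β * (n : ℝ) ^ ((3 : ℝ) / 2)) < η ∧
      distNearestInt (lam * β * (n : ℝ) ^ ((3 : ℝ) / 2)) < η ∧
      distNearestInt (lam ^ 2 * β * (n : ℝ) ^ ((3 : ℝ) / 2)) < η}) :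
    B ∩ T ⊆ retSetFloor (fun t => t ^ ((3 : ℝ) / 2)) E ∩
      retSetFloor (fun t => lam * t ^ ((3 : ℝ) / 2) + t) E :=
  stmt_17_general lam β hβ0 hind δ η hηβδ E B T hE hB hT
end
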